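/- Let A be a Frobenius algebra in a monoidal category C with Frobenius pair (ϑ : A → 𝟙, e : 𝟙 → A ⊗ A). Then A is separable if and only if there exists a morphism α : 𝟙 → A such that m_A ∘ (m_A ⊗ id_A) ∘ (id_A ⊗ α ⊗ id_A) ∘ e = η_A. -/

import Mathlib

open CategoryTheory CategoryTheory.MonoidalCategory

universe v u

variable {C : Type u} [Category.{v} C] [MonoidalCategory C]

/-- The Casimir condition for `e : 𝟙 ⟶ A ⊗ A`. -/
def Mon_.IsCasimir (A : Mon C) (e : 𝟙_ C ⟶ A.X ⊗ A.X) : Prop :=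
  (ρ_ A.X).inv ≫ (A.X ◁ e) ≫ (α_ A.X A.X A.X).inv ≫ (MonObj.mul (X := A.X) ▷ A.X) =
    (λ_ A.X).inv ≫ (e ▷ A.X) ≫ (α_ A.X A.X A.X).hom ≫ (A.X ◁ MonObj.mul (X := A.X))

/-- `(ϑ, e)` is a Frobenius pair for the algebra `A`. -/
def Mon_.IsFrobeniusPair (A : Mon C) (ϑ : A.X ⟶ 𝟙_ C) (e : 𝟙_ C ⟶ A.X ⊗ A.X) : Prop :=
  Mon_.IsCasimir A e ∧
    (e ≫ (ϑ ▷ A.X) ≫ (λ_ A.X).hom = MonObj.one (X := A.X)) ∧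
    (e ≫ (A.X ◁ ϑ) ≫ (ρ_ A.X).hom = MonObj.one (X := A.X))

/-- `A` is separable: there is a Casimir morphism splitting the multiplication. -/
def Mon_.IsSeparable' (A : Mon C) : Prop :=
  ∃ e : 𝟙_ C ⟶ A.X ⊗ A.X, Mon_.IsCasimir A e ∧ e ≫ MonObj.mul (X := A.X) = MonObj.one (X := A.X)

section Aux

variable (A : Mon C)

/-- Right multiplication by `a`. -/
def FrobAux.Rmul (a : 𝟙_ C ⟶ A.X) : A.X ⟶ A.X :=
  (ρ_ A.X).inv ≫ (A.X ◁ a) ≫ MonObj.mul (X := A.X)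

/-- Left multiplication by `a`. -/
def FrobAux.Lmul (a : 𝟙_ C ⟶ A.X) : A.X ⟶ A.X :=
  (λ_ A.X).inv ≫ (a ▷ A.X) ≫ MonObj.mul (X := A.X)

open FrobAux

/-- Reformulation of the goal morphism via right multiplication. -/
lemma FrobAux.L1 (e : 𝟙_ C ⟶ A.X ⊗ A.X) (a : 𝟙_ C ⟶ A.X) :
    e ≫ (A.X ◁ ((λ_ A.X).inv ≫ (a ▷ A.X))) ≫ (α_ A.X A.X A.X).inv ≫
      (MonObj.mul (X := A.X) ▷ A.X) ≫ MonObj.mul (X := A.X) = e ≫ (Rmul A a ▷ A.X) ≫ MonObj.mul (X := A.X) := by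
  simp [Rmul, whisker_exchange]

/-- Right multiplication is a left module map. -/
lemma FrobAux.L2 (a : 𝟙_ C ⟶ A.X) :
    MonObj.mul (X := A.X) ≫ Rmul A a = (A.X ◁ Rmul A a) ≫ MonObj.mul (X := A.X) := by
  unfold Rmul
  rw [rightUnitor_inv_naturality_assoc, ← whisker_exchange_assoc, MonObj.mul_assoc,
    associator_naturality_right_assoc]
  simp

/-- Casimir elements are stable under right multiplication by module maps. -/
lemma FrobAux.L3 {e : 𝟙_ C ⟶ A.X ⊗ A.X} {f : A.X ⟶ A.X} (hc : Mon_.IsCasimir A e)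
    (hf : MonObj.mul (X := A.X) ≫ f = (A.X ◁ f) ≫ MonObj.mul (X := A.X)) : Mon_.IsCasimir A (e ≫ (f ▷ A.X)) := by
  unfold Mon_.IsCasimir at hc ⊢
  rw [MonoidalCategory.whiskerLeft_comp_assoc, associator_inv_naturality_middle_assoc,
    ← comp_whiskerRight, ← hf, comp_whiskerRight, reassoc_of% hc,
    comp_whiskerRight, Category.assoc, associator_naturality_left_assoc,
    whisker_exchange]

/-- Associativity swap. -/
lemma FrobAux.L4 (a : 𝟙_ C ⟶ A.X) :
    (Rmul A a ▷ A.X) ≫ MonObj.mul (X := A.X) = (A.X ◁ Lmul A a) ≫ MonObj.mul (X := A.X) := by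
  simp [Rmul, Lmul, whisker_exchange]

/-- Unfolding left multiplication by `(ϑ ⊗ id) ∘ e'`. -/
lemma FrobAux.L5 (e' : 𝟙_ C ⟶ A.X ⊗ A.X) (ϑ : A.X ⟶ 𝟙_ C) :
    Lmul A (e' ≫ (ϑ ▷ A.X) ≫ (λ_ A.X).hom) =
      (λ_ A.X).inv ≫ (e' ▷ A.X) ≫ (α_ A.X A.X A.X).hom ≫ (A.X ◁ MonObj.mul (X := A.X)) ≫
        (ϑ ▷ A.X) ≫ (λ_ A.X).hom := by
  unfold Lmul
  simp only [comp_whiskerRight, Category.assoc]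
  conv_rhs => rw [whisker_exchange_assoc, ← associator_naturality_left_assoc,
    leftUnitor_naturality]
  simp

/-- Dual basis lemma. -/
lemma FrobAux.L7 {ϑ : A.X ⟶ 𝟙_ C} {e : 𝟙_ C ⟶ A.X ⊗ A.X} (h : Mon_.IsFrobeniusPair A ϑ e) :
    (λ_ A.X).inv ≫ (e ▷ A.X) ≫ (α_ A.X A.X A.X).hom ≫ (A.X ◁ MonObj.mul (X := A.X)) ≫
      (A.X ◁ ϑ) ≫ (ρ_ A.X).hom = 𝟙 A.X := by
  have h2' : e ≫ (A.X ◁ ϑ) = MonObj.one (X := A.X) ≫ (ρ_ A.X).inv := by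
    rw [← h.2.2]; simp
  rw [reassoc_of% h.1.symm, ← whisker_exchange_assoc,
    ← associator_inv_naturality_right_assoc, ← MonoidalCategory.whiskerLeft_comp_assoc,
    h2', rightUnitor_naturality]
  simp [MonObj.mul_one]

/-- Sliding a point past another point. -/
lemma FrobAux.state_swap {P Q : C} (p : 𝟙_ C ⟶ P) (q : 𝟙_ C ⟶ Q) :
    p ≫ (ρ_ P).inv ≫ (P ◁ q) = q ≫ (λ_ Q).inv ≫ (p ▷ Q) := by
  rw [rightUnitor_inv_naturality_assoc, ← unitors_inv_equal, ← whisker_exchange,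
    ← leftUnitor_inv_naturality_assoc]

/-- Scalar sliding. -/
lemma FrobAux.L8 {X₁ X₂ X₃ X₄ X : C} (p : 𝟙_ C ⟶ X₁ ⊗ X₂) (q : 𝟙_ C ⟶ X₃ ⊗ X₄)
    (t : X₂ ⊗ X₃ ⟶ 𝟙_ C) (m : X₁ ⊗ X₄ ⟶ X) :
    p ≫ (X₁ ◁ ((ρ_ X₂).inv ≫ (X₂ ◁ q) ≫ (α_ X₂ X₃ X₄).inv ≫ (t ▷ X₄) ≫ (λ_ X₄).hom)) ≫ m =
      q ≫ (((λ_ X₃).inv ≫ (p ▷ X₃) ≫ (α_ X₁ X₂ X₃).hom ≫ (X₁ ◁ t) ≫ (ρ_ X₁).hom) ▷ X₄) ≫ m := by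
  simp only [MonoidalCategory.whiskerLeft_comp, Category.assoc, whiskerLeft_rightUnitor_inv,
    comp_whiskerRight]
  rw [← associator_naturality_right_assoc, reassoc_of% (state_swap p q)]
  congr 1
  monoidal

end Aux

open FrobAux in
/-- A Frobenius algebra `A` with Frobenius pair `(ϑ, e)` is separable iff there exists
`α : 𝟙 ⟶ A` with `m_A ∘ (m_A ⊗ id) ∘ (id ⊗ α ⊗ id) ∘ e = η_A`. -/
theorem frobenius_separable_iff_exists_alpha (A : Mon C) (ϑ : A.X ⟶ 𝟙_ C)
    (e : 𝟙_ C ⟶ A.X ⊗ A.X) (h : Mon_.IsFrobeniusPair A ϑ e) :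
    Mon_.IsSeparable' A ↔
      ∃ α : 𝟙_ C ⟶ A.X,
        e ≫ (A.X ◁ ((λ_ A.X).inv ≫ (α ▷ A.X))) ≫ (α_ A.X A.X A.X).inv ≫
            (MonObj.mul (X := A.X) ▷ A.X) ≫ MonObj.mul (X := A.X) = MonObj.one (X := A.X) := by
  constructor
  · rintro ⟨e', hc', hs'⟩
    refine ⟨e' ≫ (ϑ ▷ A.X) ≫ (λ_ A.X).hom, ?_⟩
    have hL : Lmul A (e' ≫ (ϑ ▷ A.X) ≫ (λ_ A.X).hom) =
        (ρ_ A.X).inv ≫ (A.X ◁ e') ≫ (α_ A.X A.X A.X).inv ≫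
          ((MonObj.mul (X := A.X) ≫ ϑ) ▷ A.X) ≫ (λ_ A.X).hom := by
      rw [L5, ← reassoc_of% hc', comp_whiskerRight, Category.assoc]
    have hD : (λ_ A.X).inv ≫ e ▷ A.X ≫ (α_ A.X A.X A.X).hom ≫ A.X ◁ (MonObj.mul (X := A.X) ≫ ϑ) ≫
        (ρ_ A.X).hom = 𝟙 A.X := by
      simpa using L7 A h
    rw [L1, L4, hL, L8, hD]
    simpa using hs'
  · rintro ⟨α, hα⟩
    rw [L1] at hα
    exact ⟨e ≫ (Rmul A α ▷ A.X), L3 A h.1 (L2 A α),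
      by rw [Category.assoc]; exact hα⟩
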